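/- arXiv:2406.15129 — 3 statements merged into one kernel-verified Lean document; each statement's English description precedes it below -/
import Mathlib

section
/- Let W be a (λ_S+1) class with s ∈ S ∩ W, and let x, y, x', y' ∈ W with w(x,y) ≥ 1 and w(x',y') ≥ 1. Then there exists a (λ_S+1) cut C with s, x, x' ∈ C and y, y' ∉ C (a single (λ_S+1) cut to which both edges (x,y) and (x',y') contribute) if and only if there exist a nearest (λ_S+1) cut C1 of x containing s, a nearest (λ_S+1) cut C2 of x' containing s, and a Steiner vertex t, such that y, y' ∉ C1 ∪ C2 and t ∉ C1 ∪ C2. -/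
open Finset

namespace Paper

variable {α : Type*} [Fintype α] [DecidableEq α]

/-- Capacity of a cut `A` in an undirected multigraph with edge multiplicities `w`. -/
def cutCap (w : α → α → ℕ) (A : Finset α) : ℕ := ∑ u ∈ A, ∑ v ∈ Aᶜ, w u v

/-- `C` is a Steiner cut for the Steiner set `S`. -/
def IsSteinerCut (S C : Finset α) : Prop := (C ∩ S).Nonempty ∧ (S \ C).Nonempty

/-- `C` is an `S`-mincut: a Steiner cut of capacity `lam = λ_S`. -/
def IsSMincut (w : α → α → ℕ) (S : Finset α) (lam : ℕ) (C : Finset α) : Prop :=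
  IsSteinerCut S C ∧ cutCap w C = lam

/-- `C` is a `(λ_S+1)` cut: a Steiner cut of capacity `lam + 1`. -/
def IsPlusOneCut (w : α → α → ℕ) (S : Finset α) (lam : ℕ) (C : Finset α) : Prop :=
  IsSteinerCut S C ∧ cutCap w C = lam + 1

/-- A cut `C` separates `u` and `v`: exactly one of them lies in `C`. -/
def Separates (C : Finset α) (u v : α) : Prop := (u ∈ C ∧ v ∉ C) ∨ (v ∈ C ∧ u ∉ C)

/-- `W` is a `(λ_S+1)` class: an equivalence class of the relation relating `u,v`
iff no `S`-mincut separates them. -/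
def IsClass (w : α → α → ℕ) (S : Finset α) (lam : ℕ) (W : Finset α) : Prop :=
  ∃ u0 : α, ∀ v : α, v ∈ W ↔ ∀ C : Finset α, IsSMincut w S lam C → ¬ Separates C u0 v

/-- `C` is a nearest `(λ_S+1)` cut of `u` containing the Steiner vertex `s`. -/
def IsNearestPlusOneCut (w : α → α → ℕ) (S : Finset α) (lam : ℕ) (s u : α)
    (C : Finset α) : Prop :=
  IsPlusOneCut w S lam C ∧ s ∈ C ∧ u ∈ C ∧
    ∀ C' : Finset α, IsPlusOneCut w S lam C' → s ∈ C' → u ∈ C' → ¬ C' ⊂ C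

/-- A cut `C` subdivides a set `X`. -/
def Subdivides (C X : Finset α) : Prop := (X ∩ C).Nonempty ∧ (X \ C).Nonempty

lemma cutCap_eq_sum (w : α → α → ℕ) (A : Finset α) :
    cutCap w A = ∑ u, ∑ v, if u ∈ A ∧ v ∉ A then w u v else 0 := by
  have h1 : ∀ u : α, (∑ v ∈ Aᶜ, w u v) = ∑ v, if v ∉ A then w u v else 0 := by
    intro u
    rw [show (∑ v : α, if v ∉ A then w u v else 0) = ∑ v ∈ Finset.univ ∩ Aᶜ, w u v from by
      rw [← Finset.sum_ite_mem]; simp [Finset.mem_compl]]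
    simp
  calc cutCap w A
      = ∑ u, if u ∈ A then ∑ v ∈ Aᶜ, w u v else 0 := by
        rw [show (∑ u : α, if u ∈ A then ∑ v ∈ Aᶜ, w u v else 0)
            = ∑ u ∈ Finset.univ ∩ A, ∑ v ∈ Aᶜ, w u v from Finset.sum_ite_mem _ _ _]
        simp [cutCap]
    _ = ∑ u, ∑ v, if u ∈ A ∧ v ∉ A then w u v else 0 := by
        refine Finset.sum_congr rfl fun u _ => ?_
        by_cases h : u ∈ A <;> simp [h, h1]

lemma cutCap_submodular (w : α → α → ℕ) (A B : Finset α) :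
    cutCap w (A ∪ B) + cutCap w (A ∩ B) ≤ cutCap w A + cutCap w B := by
  simp only [cutCap_eq_sum]
  rw [← Finset.sum_add_distrib, ← Finset.sum_add_distrib]
  refine Finset.sum_le_sum fun u _ => ?_
  rw [← Finset.sum_add_distrib, ← Finset.sum_add_distrib]
  refine Finset.sum_le_sum fun v _ => ?_
  by_cases h1 : u ∈ A <;> by_cases h2 : u ∈ B <;> by_cases h3 : v ∈ A <;>
    by_cases h4 : v ∈ B <;>
    simp [h1, h2, h3, h4, Finset.mem_union, Finset.mem_inter]

/-- No S-mincut separates two members of a (λ_S+1) class. -/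
lemma class_no_separation {w : α → α → ℕ} {S : Finset α} {lam : ℕ} {W : Finset α}
    (hW : IsClass w S lam W) {a b : α} (ha : a ∈ W) (hb : b ∈ W)
    {C : Finset α} (hC : IsSMincut w S lam C) (haC : a ∈ C) (hbC : b ∉ C) : False := by
  obtain ⟨u0, hu0⟩ := hW
  have h1 := (hu0 a).mp ha C hC
  have h2 := (hu0 b).mp hb C hC
  simp only [Separates] at h1 h2
  tauto

/-- Any (λ_S+1) cut containing s and x contains a nearest one. -/
lemma exists_nearest {w : α → α → ℕ} {S : Finset α} {lam : ℕ} {s x : α}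
    {C : Finset α} (hC : IsPlusOneCut w S lam C) (hs : s ∈ C) (hx : x ∈ C) :
    ∃ C1, IsNearestPlusOneCut w S lam s x C1 ∧ C1 ⊆ C := by
  have key : ∀ n : ℕ, ∀ C : Finset α, C.card ≤ n → IsPlusOneCut w S lam C → s ∈ C → x ∈ C →
      ∃ C1, IsNearestPlusOneCut w S lam s x C1 ∧ C1 ⊆ C := by
    intro n
    induction n with
    | zero =>
      intro C hcard _ hs _
      exact absurd (Finset.card_pos.mpr ⟨s, hs⟩) (by omega)
    | succ n ih =>
      intro C hcard hC hs hx
      by_cases h : ∃ C', IsPlusOneCut w S lam C' ∧ s ∈ C' ∧ x ∈ C' ∧ C' ⊂ C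
      · obtain ⟨C', hC', hs', hx', hss⟩ := h
        have hlt : C'.card < C.card := Finset.card_lt_card hss
        obtain ⟨C1, h1, h2⟩ := ih C' (by omega) hC' hs' hx'
        exact ⟨C1, h1, h2.trans hss.subset⟩
      · push_neg at h
        exact ⟨C, ⟨hC, hs, hx, fun C' h1 h2 h3 => h C' h1 h2 h3⟩, le_refl _⟩
  exact key C.card C le_rfl hC hs hx

/-- Characterization of when two failed edges contribute to a single (λ_S+1) cut. -/
theorem dual_failure_characterization
    (w : α → α → ℕ) (hsym : ∀ u v, w u v = w v u) (hdiag : ∀ u, w u u = 0)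
    (S : Finset α) (hScard : 2 ≤ S.card) (lam : ℕ)
    (hlam_ex : ∃ C : Finset α, IsSteinerCut S C ∧ cutCap w C = lam)
    (hlam_min : ∀ C : Finset α, IsSteinerCut S C → lam ≤ cutCap w C)
    (W : Finset α) (hW : IsClass w S lam W)
    (s : α) (hsS : s ∈ S) (hsW : s ∈ W)
    (x y x' y' : α) (hxW : x ∈ W) (hyW : y ∈ W) (hx'W : x' ∈ W) (hy'W : y' ∈ W)
    (hxy : 1 ≤ w x y) (hx'y' : 1 ≤ w x' y') :
    (∃ C : Finset α, IsPlusOneCut w S lam C ∧ s ∈ C ∧ x ∈ C ∧ x' ∈ C ∧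
        y ∉ C ∧ y' ∉ C) ↔
      (∃ C1 C2 : Finset α, ∃ t ∈ S,
        IsNearestPlusOneCut w S lam s x C1 ∧ IsNearestPlusOneCut w S lam s x' C2 ∧
        y ∉ C1 ∪ C2 ∧ y' ∉ C1 ∪ C2 ∧ t ∉ C1 ∪ C2) := by
  constructor
  · rintro ⟨C, hC, hsC, hxC, hx'C, hyC, hy'C⟩
    obtain ⟨C1, hC1, hC1sub⟩ := exists_nearest hC hsC hxC
    obtain ⟨C2, hC2, hC2sub⟩ := exists_nearest hC hsC hx'C
    obtain ⟨t, ht⟩ := hC.1.2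
    rw [Finset.mem_sdiff] at ht
    refine ⟨C1, C2, t, ht.1, hC1, hC2, ?_, ?_, ?_⟩ <;>
      simp only [Finset.mem_union, not_or] <;>
      exact ⟨fun h => by first | exact hyC (hC1sub h) | exact hy'C (hC1sub h) | exact ht.2 (hC1sub h),
             fun h => by first | exact hyC (hC2sub h) | exact hy'C (hC2sub h) | exact ht.2 (hC2sub h)⟩
  · rintro ⟨C1, C2, t, htS, hC1, hC2, hy, hy', ht⟩
    simp only [Finset.mem_union, not_or] at hy hy' ht
    obtain ⟨⟨hC1sc, hC1cap⟩, hsC1, hxC1, -⟩ := hC1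
    obtain ⟨⟨hC2sc, hC2cap⟩, hsC2, hx'C2, -⟩ := hC2
    -- the union and intersection are Steiner cuts
    have hUsc : IsSteinerCut S (C1 ∪ C2) :=
      ⟨⟨s, Finset.mem_inter.mpr ⟨Finset.mem_union_left _ hsC1, hsS⟩⟩,
       ⟨t, Finset.mem_sdiff.mpr ⟨htS, by simp [ht.1, ht.2]⟩⟩⟩
    have hIsc : IsSteinerCut S (C1 ∩ C2) :=
      ⟨⟨s, Finset.mem_inter.mpr ⟨Finset.mem_inter.mpr ⟨hsC1, hsC2⟩, hsS⟩⟩,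
       ⟨t, Finset.mem_sdiff.mpr ⟨htS, by simp [ht.1]⟩⟩⟩
    -- the intersection is not a mincut: it would separate s and y, both in W
    have hIne : cutCap w (C1 ∩ C2) ≠ lam := by
      intro hmin
      exact class_no_separation hW hsW hyW ⟨hIsc, hmin⟩
        (Finset.mem_inter.mpr ⟨hsC1, hsC2⟩) (by simp [hy.1])
    have hIge : lam + 1 ≤ cutCap w (C1 ∩ C2) :=
      lt_of_le_of_ne (hlam_min _ hIsc) (Ne.symm hIne)
    -- submodularity bounds the union's capacity
    have hsub := cutCap_submodular w C1 C2
    rw [hC1cap, hC2cap] at hsub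
    have hUle : cutCap w (C1 ∪ C2) ≤ lam + 1 := by omega
    have hUne : cutCap w (C1 ∪ C2) ≠ lam := by
      intro hmin
      exact class_no_separation hW hsW hyW ⟨hUsc, hmin⟩
        (Finset.mem_union_left _ hsC1) (by simp [hy.1, hy.2])
    have hUge : lam ≤ cutCap w (C1 ∪ C2) := hlam_min _ hUsc
    have hUcap : cutCap w (C1 ∪ C2) = lam + 1 := by omega
    exact ⟨C1 ∪ C2, ⟨hUsc, hUcap⟩, Finset.mem_union_left _ hsC1,
      Finset.mem_union_left _ hxC1, Finset.mem_union_right _ hx'C2,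
      by simp [hy.1, hy.2], by simp [hy'.1, hy'.2]⟩

end Paper
end

section
/- In the directed multigraph D(B), let u0 ∈ L and v0 ∈ R, and let w' agree with w except that w'(s,u0) = w(s,u0) − 1 and w'(v0,t) = w(v0,t) − 1 (failure of one edge (s,u0) and one edge (v0,t)). Then λ(w') = λ(w) − 1 if (u0,v0) ∈ E, and λ(w') = λ(w) − 2 if (u0,v0) ∉ E. -/
open Finset

namespace Paper

variable {α : Type*} [Fintype α] [DecidableEq α]

/-- Capacity of an (s,t)-cut `C` in a directed multigraph with edge multiplicities `w`:
the number of edges leaving `C`. -/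
def dirCap (w : α → α → ℕ) (C : Finset α) : ℕ := ∑ a ∈ C, ∑ b ∈ Cᶜ, w a b

/-- The minimum capacity `λ(w)` of an (s,t)-cut. -/
noncomputable def stLambda (w : α → α → ℕ) (s t : α) : ℕ :=
  sInf {n : ℕ | ∃ C : Finset α, s ∈ C ∧ t ∉ C ∧ dirCap w C = n}
lemma cap_formula
    (s t : α) (L R : Finset α) (E : Finset (α × α))
    (hsL : s ∉ L) (hsR : s ∉ R) (htL : t ∉ L) (htR : t ∉ R)
    (hLR : Disjoint L R) (hE : E ⊆ L ×ˢ R)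
    (w : α → α → ℕ)
    (hw_sL : ∀ u ∈ L, w s u = (R.filter (fun v => (u, v) ∈ E)).card + 1)
    (hw_Lt : ∀ u ∈ L, w u t = 1)
    (hw_sR : ∀ v ∈ R, w s v = 1)
    (hw_Rt : ∀ v ∈ R, w v t = (L.filter (fun u => (u, v) ∈ E)).card + 1)
    (hw_LR : ∀ u ∈ L, ∀ v ∈ R, w u v = if (u, v) ∈ E then 1 else 0)
    (hw_zero : ∀ a b : α, w a b ≠ 0 →
        (a = s ∧ b ∈ L) ∨ (a ∈ L ∧ b = t) ∨ (a = s ∧ b ∈ R) ∨ (a ∈ R ∧ b = t) ∨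
        (a ∈ L ∧ b ∈ R ∧ (a, b) ∈ E))
    (C : Finset α) (hsC : s ∈ C) (htC : t ∉ C) :
    dirCap w C = L.card + R.card + E.card
      + (E.filter fun p => p.1 ∉ C ∧ p.2 ∈ C).card := by
  classical
  set T1 : Finset (α × α) := {s} ×ˢ ((L ∪ R) \ C) with hT1
  set T2 : Finset (α × α) := ((L ∪ R) ∩ C) ×ˢ {t} with hT2
  set T3 : Finset (α × α) := (L ∩ C) ×ˢ (R \ C) with hT3
  have hsub : T1 ∪ T2 ∪ T3 ⊆ C ×ˢ Cᶜ := by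
    intro p hp
    simp only [hT1, hT2, hT3, mem_union, mem_product, mem_singleton, mem_sdiff,
      mem_inter, mem_compl] at hp ⊢
    rcases hp with (⟨h1, h2⟩ | ⟨h1, h2⟩) | ⟨h1, h2⟩
    · exact ⟨h1 ▸ hsC, h2.2⟩
    · exact ⟨h1.2, h2 ▸ htC⟩
    · exact ⟨h1.2, h2.2⟩
  have hzero : ∀ p ∈ C ×ˢ Cᶜ, p ∉ T1 ∪ T2 ∪ T3 → w p.1 p.2 = 0 := by
    intro p hp hpT
    by_contra hw
    rcases hw_zero p.1 p.2 hw with ⟨h1, h2⟩ | ⟨h1, h2⟩ | ⟨h1, h2⟩ | ⟨h1, h2⟩ | ⟨h1, h2, h3⟩ <;>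
      simp only [mem_product, mem_compl] at hp <;>
      refine hpT ?_ <;>
      simp only [hT1, hT2, hT3, mem_union, mem_product, mem_singleton, mem_sdiff, mem_inter]
    · exact Or.inl (Or.inl ⟨h1, Or.inl h2, hp.2⟩)
    · exact Or.inl (Or.inr ⟨⟨Or.inl h1, hp.1⟩, h2⟩)
    · exact Or.inl (Or.inl ⟨h1, Or.inr h2, hp.2⟩)
    · exact Or.inl (Or.inr ⟨⟨Or.inr h1, hp.1⟩, h2⟩)
    · exact Or.inr ⟨⟨h1, hp.1⟩, h2, hp.2⟩
  have hd12 : Disjoint T1 T2 := by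
    rw [Finset.disjoint_left]
    intro p hp1 hp2
    simp only [hT1, hT2, mem_product, mem_singleton, mem_sdiff, mem_union] at hp1 hp2
    rcases hp1.2.1 with h | h
    · exact htL (hp2.2 ▸ h)
    · exact htR (hp2.2 ▸ h)
  have hd13 : Disjoint T1 T3 := by
    rw [Finset.disjoint_left]
    intro p hp1 hp3
    simp only [hT1, hT3, mem_product, mem_singleton, mem_inter, mem_sdiff] at hp1 hp3
    exact hsL (hp1.1 ▸ hp3.1.1)
  have hd23 : Disjoint T2 T3 := by
    rw [Finset.disjoint_left]
    intro p hp2 hp3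
    simp only [hT2, hT3, mem_product, mem_singleton, mem_inter, mem_sdiff] at hp2 hp3
    exact htR (hp2.2 ▸ hp3.2.1)
  have key : dirCap w C = ∑ p ∈ T1 ∪ T2 ∪ T3, w p.1 p.2 := by
    rw [dirCap, ← Finset.sum_product']
    exact (Finset.sum_subset hsub hzero).symm
  rw [key, Finset.sum_union (Finset.disjoint_union_left.mpr ⟨hd13, hd23⟩),
    Finset.sum_union hd12]
  -- compute the three sums
  have hLRd : Disjoint (L \ C) (R \ C) := hLR.mono sdiff_le sdiff_le
  have hLRd' : Disjoint (L ∩ C) (R ∩ C) := hLR.mono inter_subset_left inter_subset_left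
  have S1 : ∑ p ∈ T1, w p.1 p.2
      = (∑ u ∈ L \ C, ((R.filter (fun v => (u, v) ∈ E)).card + 1)) + (R \ C).card := by
    rw [hT1, Finset.sum_product', Finset.sum_singleton, union_sdiff_distrib,
      Finset.sum_union hLRd]
    congr 1
    · exact Finset.sum_congr rfl fun u hu => hw_sL u (mem_sdiff.mp hu).1
    · rw [Finset.sum_congr rfl fun v hv => hw_sR v (mem_sdiff.mp hv).1]
      simp
  have S2 : ∑ p ∈ T2, w p.1 p.2
      = (L ∩ C).card + ∑ v ∈ R ∩ C, ((L.filter (fun u => (u, v) ∈ E)).card + 1) := by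
    rw [hT2, Finset.sum_product, union_inter_distrib_right, Finset.sum_union hLRd']
    simp only [Finset.sum_singleton]
    congr 1
    · rw [Finset.sum_congr rfl fun u hu => hw_Lt u (mem_inter.mp hu).1]
      simp
    · exact Finset.sum_congr rfl fun v hv => hw_Rt v (mem_inter.mp hv).1
  have S3 : ∑ p ∈ T3, w p.1 p.2
      = ∑ u ∈ L ∩ C, ∑ v ∈ R \ C, (if (u, v) ∈ E then 1 else 0) := by
    rw [hT3, Finset.sum_product']
    exact Finset.sum_congr rfl fun u hu => Finset.sum_congr rfl fun v hv =>
      hw_LR u (mem_inter.mp hu).1 v (mem_sdiff.mp hv).1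
  rw [S1, S2, S3]
  -- degree sums distribute
  rw [Finset.sum_add_distrib, Finset.sum_add_distrib]
  simp only [Finset.sum_const, smul_eq_mul, mul_one]
  -- now reduce to a counting identity over L ×ˢ R
  have cardL : (L \ C).card + (L ∩ C).card = L.card := card_sdiff_add_card_inter L C
  have cardR : (R \ C).card + (R ∩ C).card = R.card := card_sdiff_add_card_inter R C
  -- counting identity
  have hcount :
      (∑ u ∈ L \ C, (R.filter (fun v => (u, v) ∈ E)).card)
      + (∑ v ∈ R ∩ C, (L.filter (fun u => (u, v) ∈ E)).card)
      + (∑ u ∈ L ∩ C, ∑ v ∈ R \ C, (if (u, v) ∈ E then 1 else 0))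
      = E.card + (E.filter fun p => p.1 ∉ C ∧ p.2 ∈ C).card := by
    have e1 : ∑ u ∈ L \ C, (R.filter (fun v => (u, v) ∈ E)).card
        = ∑ u ∈ L, ∑ v ∈ R, (if u ∉ C then (if (u, v) ∈ E then 1 else 0) else 0) := by
      rw [sdiff_eq_filter, Finset.sum_filter]
      refine Finset.sum_congr rfl fun u _ => ?_
      by_cases hu : u ∈ C
      · simp [hu]
      · rw [if_pos hu, Finset.card_filter]
        exact Finset.sum_congr rfl fun v _ => (if_pos hu).symm
    have e2 : ∑ v ∈ R ∩ C, (L.filter (fun u => (u, v) ∈ E)).card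
        = ∑ u ∈ L, ∑ v ∈ R, (if v ∈ C then (if (u, v) ∈ E then 1 else 0) else 0) := by
      rw [Finset.sum_comm (s := L)]
      rw [← filter_mem_eq_inter, Finset.sum_filter]
      refine Finset.sum_congr rfl fun v _ => ?_
      by_cases hv : v ∈ C
      · rw [if_pos hv, Finset.card_filter]
        exact Finset.sum_congr rfl fun u _ => (if_pos hv).symm
      · simp [hv]
    have e3 : ∑ u ∈ L ∩ C, ∑ v ∈ R \ C, (if (u, v) ∈ E then (1:ℕ) else 0)
        = ∑ u ∈ L, ∑ v ∈ R, (if u ∈ C ∧ v ∉ C then (if (u, v) ∈ E then 1 else 0) else 0) := by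
      rw [← filter_mem_eq_inter, Finset.sum_filter]
      refine Finset.sum_congr rfl fun u _ => ?_
      by_cases hu : u ∈ C
      · rw [if_pos hu, sdiff_eq_filter, Finset.sum_filter]
        refine Finset.sum_congr rfl fun v _ => ?_
        by_cases hv : v ∈ C <;> simp [hu, hv]
      · simp [hu]
    have e4 : E.card = ∑ u ∈ L, ∑ v ∈ R, (if (u, v) ∈ E then (1:ℕ) else 0) := by
      rw [← Finset.sum_product', ← Finset.card_filter]
      congr 1
      ext p
      simp only [Finset.mem_filter]
      exact ⟨fun h => ⟨hE h, h⟩, fun h => h.2⟩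
    have e5 : (E.filter fun p => p.1 ∉ C ∧ p.2 ∈ C).card
        = ∑ u ∈ L, ∑ v ∈ R,
            (if (u, v) ∈ E ∧ u ∉ C ∧ v ∈ C then (1:ℕ) else 0) := by
      rw [← Finset.sum_product', ← Finset.card_filter]
      congr 1
      ext p
      simp only [Finset.mem_filter]
      exact ⟨fun ⟨h1, h2⟩ => ⟨hE h1, h1, h2⟩, fun ⟨_, h⟩ => h⟩
    rw [e1, e2, e3, e4, e5, ← Finset.sum_add_distrib, ← Finset.sum_add_distrib,
      ← Finset.sum_add_distrib]
    refine Finset.sum_congr rfl fun u _ => ?_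
    rw [← Finset.sum_add_distrib, ← Finset.sum_add_distrib, ← Finset.sum_add_distrib]
    refine Finset.sum_congr rfl fun v _ => ?_
    by_cases hEp : (u, v) ∈ E <;> by_cases hu : u ∈ C <;> by_cases hv : v ∈ C <;>
      simp [hEp, hu, hv]
  omega
lemma sum_pair_ind (C D : Finset α) (x y : α) :
    (∑ a ∈ C, ∑ b ∈ D, if a = x ∧ b = y then (1:ℕ) else 0)
      = if x ∈ C ∧ y ∈ D then 1 else 0 := by
  rw [← Finset.sum_product']
  have h : ∀ p : α × α, (if p.1 = x ∧ p.2 = y then (1:ℕ) else 0)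
      = if p = (x, y) then 1 else 0 := by
    intro p
    simp [Prod.ext_iff]
  rw [Finset.sum_congr rfl fun p _ => h p,
    Finset.sum_ite_eq' (C ×ˢ D) (x, y) (fun _ => 1)]
  simp [Finset.mem_product]

lemma cap_rel
    (s t u0 v0 : α) (hsv0 : s ≠ v0)
    (w w' : α → α → ℕ)
    (hw1pos : 1 ≤ w s u0) (hw2pos : 1 ≤ w v0 t)
    (hw'1 : w' s u0 = w s u0 - 1) (hw'2 : w' v0 t = w v0 t - 1)
    (hw'3 : ∀ a b : α, ¬(a = s ∧ b = u0) → ¬(a = v0 ∧ b = t) → w' a b = w a b)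
    (C : Finset α) (hsC : s ∈ C) (htC : t ∉ C) :
    dirCap w C = dirCap w' C + (if u0 ∈ C then 0 else 1)
      + (if v0 ∈ C then 1 else 0) := by
  have hpt : ∀ a b : α, w a b = w' a b + (if a = s ∧ b = u0 then 1 else 0)
      + (if a = v0 ∧ b = t then 1 else 0) := by
    intro a b
    by_cases h1 : a = s ∧ b = u0
    · obtain ⟨rfl, rfl⟩ := h1
      have h2 : ¬(a = v0 ∧ b = t) := fun h => hsv0 h.1
      rw [if_pos ⟨rfl, rfl⟩, if_neg h2, hw'1]
      omega
    · by_cases h2 : a = v0 ∧ b = t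
      · obtain ⟨rfl, rfl⟩ := h2
        rw [if_neg h1, if_pos ⟨rfl, rfl⟩, hw'2]
        omega
      · rw [if_neg h1, if_neg h2, hw'3 a b h1 h2]
        omega
  have hsum : dirCap w C = dirCap w' C
      + (∑ a ∈ C, ∑ b ∈ Cᶜ, if a = s ∧ b = u0 then 1 else 0)
      + (∑ a ∈ C, ∑ b ∈ Cᶜ, if a = v0 ∧ b = t then 1 else 0) := by
    rw [dirCap, dirCap,
      Finset.sum_congr rfl fun a _ => Finset.sum_congr rfl fun b _ => hpt a b]
    simp only [Finset.sum_add_distrib]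
  rw [hsum, sum_pair_ind, sum_pair_ind]
  have h1 : u0 ∈ Cᶜ ↔ u0 ∉ C := Finset.mem_compl
  have h2 : t ∈ Cᶜ := Finset.mem_compl.mpr htC
  by_cases hu : u0 ∈ C <;> by_cases hv : v0 ∈ C <;>
    simp [hsC, htC, hu, hv, Finset.mem_compl]

/-- Dual edge failure in the directed multigraph D(B): failing one edge (s,u0) and one
edge (v0,t) reduces the (s,t)-mincut capacity by exactly 1 if (u0,v0) ∈ E, and by
exactly 2 otherwise. -/
theorem dual_edge_failure_in_DB
    (s t : α) (L R : Finset α) (E : Finset (α × α))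
    (hst : s ≠ t) (hsL : s ∉ L) (hsR : s ∉ R) (htL : t ∉ L) (htR : t ∉ R)
    (hLR : Disjoint L R)
    (hV : (Finset.univ : Finset α) = {s, t} ∪ L ∪ R)
    (hE : E ⊆ L ×ˢ R)
    (w : α → α → ℕ)
    (hw_sL : ∀ u ∈ L, w s u = (R.filter (fun v => (u, v) ∈ E)).card + 1)
    (hw_Lt : ∀ u ∈ L, w u t = 1)
    (hw_sR : ∀ v ∈ R, w s v = 1)
    (hw_Rt : ∀ v ∈ R, w v t = (L.filter (fun u => (u, v) ∈ E)).card + 1)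
    (hw_LR : ∀ u ∈ L, ∀ v ∈ R, w u v = if (u, v) ∈ E then 1 else 0)
    (hw_zero : ∀ a b : α, w a b ≠ 0 →
        (a = s ∧ b ∈ L) ∨ (a ∈ L ∧ b = t) ∨ (a = s ∧ b ∈ R) ∨ (a ∈ R ∧ b = t) ∨
        (a ∈ L ∧ b ∈ R ∧ (a, b) ∈ E))
    (u0 : α) (hu0 : u0 ∈ L) (v0 : α) (hv0 : v0 ∈ R)
    (w' : α → α → ℕ)
    (hw'1 : w' s u0 = w s u0 - 1)
    (hw'2 : w' v0 t = w v0 t - 1)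
    (hw'3 : ∀ a b : α, ¬(a = s ∧ b = u0) → ¬(a = v0 ∧ b = t) → w' a b = w a b) :
    ((u0, v0) ∈ E → (stLambda w' s t : ℤ) = (stLambda w s t : ℤ) - 1) ∧
    ((u0, v0) ∉ E → (stLambda w' s t : ℤ) = (stLambda w s t : ℤ) - 2) := by
  classical
  have hdLR := Finset.disjoint_left.mp hLR
  have hsu0 : s ≠ u0 := fun h => hsL (h ▸ hu0)
  have hsv0 : s ≠ v0 := fun h => hsR (h ▸ hv0)
  have htv0 : t ≠ v0 := fun h => htR (h ▸ hv0)
  have hu0v0 : u0 ≠ v0 := fun h => hdLR hu0 (h ▸ hv0)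
  have hw1pos : 1 ≤ w s u0 := by rw [hw_sL u0 hu0]; omega
  have hw2pos : 1 ≤ w v0 t := by rw [hw_Rt v0 hv0]; omega
  set N := L.card + R.card + E.card with hNdef
  have hNL : 1 ≤ L.card := Finset.card_pos.mpr ⟨u0, hu0⟩
  have hNR : 1 ≤ R.card := Finset.card_pos.mpr ⟨v0, hv0⟩
  have capw : ∀ C : Finset α, s ∈ C → t ∉ C →
      dirCap w C = N + (E.filter fun p => p.1 ∉ C ∧ p.2 ∈ C).card :=
    fun C h1 h2 => cap_formula s t L R E hsL hsR htL htR hLR hE w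
      hw_sL hw_Lt hw_sR hw_Rt hw_LR hw_zero C h1 h2
  have rel : ∀ C : Finset α, s ∈ C → t ∉ C →
      dirCap w C = dirCap w' C + (if u0 ∈ C then 0 else 1)
        + (if v0 ∈ C then 1 else 0) :=
    fun C h1 h2 => cap_rel s t u0 v0 hsv0 w w' hw1pos hw2pos hw'1 hw'2 hw'3 C h1 h2
  -- cuts contained in {s} ∪ L have zero extra term
  have hext0 : ∀ C : Finset α, (∀ x ∈ C, x = s ∨ x ∈ L) →
      (E.filter fun p => p.1 ∉ C ∧ p.2 ∈ C) = ∅ := by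
    intro C hC
    refine Finset.filter_eq_empty_iff.mpr ?_
    rintro p hp ⟨h1, h2⟩
    have hp2R : p.2 ∈ R := (Finset.mem_product.mp (hE hp)).2
    rcases hC p.2 h2 with h | h
    · exact hsR (h ▸ hp2R)
    · exact hdLR h hp2R
  -- λ(w) = N
  have hsC0 : s ∈ insert s L := mem_insert_self s L
  have htC0 : t ∉ insert s L := by
    intro h
    rcases mem_insert.mp h with h | h
    · exact hst h.symm
    · exact htL h
  have hmemN : N ∈ {n : ℕ | ∃ C : Finset α, s ∈ C ∧ t ∉ C ∧ dirCap w C = n} := by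
    refine ⟨insert s L, hsC0, htC0, ?_⟩
    rw [capw _ hsC0 htC0, hext0 (insert s L) (fun x hx => mem_insert.mp hx)]
    simp
  have hLam : stLambda w s t = N := by
    refine le_antisymm (Nat.sInf_le hmemN) (le_csInf ⟨N, hmemN⟩ ?_)
    rintro n ⟨C, h1, h2, rfl⟩
    rw [capw C h1 h2]
    omega
  constructor
  · -- (u0, v0) ∈ E : λ(w') = N - 1
    intro huv
    have hsC1 : s ∈ insert s (L.erase u0) := mem_insert_self _ _
    have htC1 : t ∉ insert s (L.erase u0) := by
      intro h
      rcases mem_insert.mp h with h | h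
      · exact hst h.symm
      · exact htL (Finset.erase_subset u0 L h)
    have hu1 : u0 ∉ insert s (L.erase u0) := by
      intro h
      rcases mem_insert.mp h with h | h
      · exact hsu0 h.symm
      · exact (Finset.mem_erase.mp h).1 rfl
    have hv1 : v0 ∉ insert s (L.erase u0) := by
      intro h
      rcases mem_insert.mp h with h | h
      · exact hsv0 h.symm
      · exact hdLR (Finset.erase_subset u0 L h) hv0
    have heq1 : dirCap w' (insert s (L.erase u0)) = N - 1 := by
      have h := rel _ hsC1 htC1
      rw [capw _ hsC1 htC1,
        hext0 _ (fun x hx => (mem_insert.mp hx).imp id (fun h => Finset.erase_subset u0 L h)),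
        if_neg hu1, if_neg hv1] at h
      simp only [Finset.card_empty] at h
      omega
    have hmem1 : N - 1 ∈ {n : ℕ | ∃ C : Finset α, s ∈ C ∧ t ∉ C ∧ dirCap w' C = n} :=
      ⟨insert s (L.erase u0), hsC1, htC1, heq1⟩
    have hLam' : stLambda w' s t = N - 1 := by
      refine le_antisymm (Nat.sInf_le hmem1) (le_csInf ⟨N - 1, hmem1⟩ ?_)
      rintro n ⟨C, h1, h2, rfl⟩
      have hrel := rel C h1 h2
      rw [capw C h1 h2] at hrel
      by_cases hu : u0 ∈ C
      · by_cases hv : v0 ∈ C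
        · rw [if_pos hu, if_pos hv] at hrel; omega
        · rw [if_pos hu, if_neg hv] at hrel; omega
      · by_cases hv : v0 ∈ C
        · have hx : (u0, v0) ∈ E.filter (fun p => p.1 ∉ C ∧ p.2 ∈ C) :=
            Finset.mem_filter.mpr ⟨huv, hu, hv⟩
          have hcard : 1 ≤ (E.filter fun p => p.1 ∉ C ∧ p.2 ∈ C).card :=
            Finset.card_pos.mpr ⟨_, hx⟩
          rw [if_neg hu, if_pos hv] at hrel; omega
        · rw [if_neg hu, if_neg hv] at hrel; omega
    rw [hLam, hLam']
    omega
  · -- (u0, v0) ∉ E : λ(w') = N - 2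
    intro huv
    set C2 : Finset α := insert v0 (insert s (L.erase u0)) with hC2def
    have hsC2 : s ∈ C2 := mem_insert_of_mem (mem_insert_self _ _)
    have htC2 : t ∉ C2 := by
      intro h
      rcases mem_insert.mp h with h | h
      · exact htv0 h
      · rcases mem_insert.mp h with h | h
        · exact hst h.symm
        · exact htL (Finset.erase_subset u0 L h)
    have hu2 : u0 ∉ C2 := by
      intro h
      rcases mem_insert.mp h with h | h
      · exact hu0v0 h
      · rcases mem_insert.mp h with h | h
        · exact hsu0 h.symm
        · exact (Finset.mem_erase.mp h).1 rfl
    have hv2 : v0 ∈ C2 := mem_insert_self _ _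
    have hext2 : (E.filter fun p => p.1 ∉ C2 ∧ p.2 ∈ C2) = ∅ := by
      refine Finset.filter_eq_empty_iff.mpr ?_
      rintro ⟨p1, p2⟩ hp ⟨h1, h2⟩
      have hpLR := Finset.mem_product.mp (hE hp)
      have hp1L : p1 ∈ L := hpLR.1
      have hp2R : p2 ∈ R := hpLR.2
      have hp2 : p2 = v0 := by
        rcases mem_insert.mp h2 with h | h
        · exact h
        · rcases mem_insert.mp h with h | h
          · exact absurd (h ▸ hp2R) hsR
          · exact absurd hp2R (hdLR (Finset.erase_subset u0 L h))
      have hp1 : p1 = u0 := by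
        by_contra hne
        exact h1 (mem_insert_of_mem (mem_insert_of_mem
          (Finset.mem_erase.mpr ⟨hne, hp1L⟩)))
      exact huv (hp1 ▸ hp2 ▸ hp)
    have heq2 : dirCap w' C2 = N - 2 := by
      have h := rel C2 hsC2 htC2
      rw [capw C2 hsC2 htC2, hext2, if_neg hu2, if_pos hv2] at h
      simp only [Finset.card_empty] at h
      omega
    have hmem2 : N - 2 ∈ {n : ℕ | ∃ C : Finset α, s ∈ C ∧ t ∉ C ∧ dirCap w' C = n} :=
      ⟨C2, hsC2, htC2, heq2⟩
    have hLam' : stLambda w' s t = N - 2 := by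
      refine le_antisymm (Nat.sInf_le hmem2) (le_csInf ⟨N - 2, hmem2⟩ ?_)
      rintro n ⟨C, h1, h2, rfl⟩
      have hrel := rel C h1 h2
      rw [capw C h1 h2] at hrel
      by_cases hu : u0 ∈ C <;> by_cases hv : v0 ∈ C <;>
        simp only [if_pos, if_neg, hu, hv, if_true, if_false] at hrel <;> omega
    rw [hLam, hLam']
    omega

end Paper
end

section
/- In the directed multigraph D(B), let u0 ∈ L and v0 ∈ R, and let w' agree with w except that w'(s,v0) = w(s,v0) + 1 and w'(u0,t) = w(u0,t) + 1 (insertion of one edge (s,v0) and one edge (u0,t)). Then λ(w') = λ(w) + 1 if (u0,v0) ∈ E, and λ(w') = λ(w) if (u0,v0) ∉ E. -/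
open Finset

namespace Paper

variable {α : Type*} [Fintype α] [DecidableEq α]

/-- Dual edge insertion in the directed multigraph D(B): inserting one edge (s,v0) and
one edge (u0,t) increases the (s,t)-mincut capacity by exactly 1 if (u0,v0) ∈ E, and
leaves it unchanged otherwise. -/
theorem dual_edge_insertion_in_DB
    (s t : α) (L R : Finset α) (E : Finset (α × α))
    (hst : s ≠ t) (hsL : s ∉ L) (hsR : s ∉ R) (htL : t ∉ L) (htR : t ∉ R)
    (hLR : Disjoint L R)
    (hV : (Finset.univ : Finset α) = {s, t} ∪ L ∪ R)
    (hE : E ⊆ L ×ˢ R)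
    (w : α → α → ℕ)
    (hw_sL : ∀ u ∈ L, w s u = (R.filter (fun v => (u, v) ∈ E)).card + 1)
    (hw_Lt : ∀ u ∈ L, w u t = 1)
    (hw_sR : ∀ v ∈ R, w s v = 1)
    (hw_Rt : ∀ v ∈ R, w v t = (L.filter (fun u => (u, v) ∈ E)).card + 1)
    (hw_LR : ∀ u ∈ L, ∀ v ∈ R, w u v = if (u, v) ∈ E then 1 else 0)
    (hw_zero : ∀ a b : α, w a b ≠ 0 →
        (a = s ∧ b ∈ L) ∨ (a ∈ L ∧ b = t) ∨ (a = s ∧ b ∈ R) ∨ (a ∈ R ∧ b = t) ∨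
        (a ∈ L ∧ b ∈ R ∧ (a, b) ∈ E))
    (u0 : α) (hu0 : u0 ∈ L) (v0 : α) (hv0 : v0 ∈ R)
    (w' : α → α → ℕ)
    (hw'1 : w' s v0 = w s v0 + 1)
    (hw'2 : w' u0 t = w u0 t + 1)
    (hw'3 : ∀ a b : α, ¬(a = s ∧ b = v0) → ¬(a = u0 ∧ b = t) → w' a b = w a b) :
    ((u0, v0) ∈ E → stLambda w' s t = stLambda w s t + 1) ∧
    ((u0, v0) ∉ E → stLambda w' s t = stLambda w s t) := by
  classical
  -- basic distinctness facts
  have hts : t ≠ s := hst.symm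
  have hv0s : v0 ≠ s := fun h => hsR (h ▸ hv0)
  have hv0t : v0 ≠ t := fun h => htR (h ▸ hv0)
  have hu0s : u0 ≠ s := fun h => hsL (h ▸ hu0)
  have hu0t : u0 ≠ t := fun h => htL (h ▸ hu0)
  have hu0v0 : u0 ≠ v0 := fun h => (Finset.disjoint_left.mp hLR hu0) (h ▸ hv0)
  have hmemall : ∀ x : α, x = s ∨ x = t ∨ x ∈ L ∨ x ∈ R := by
    intro x
    have hx : x ∈ ({s, t} ∪ L ∪ R : Finset α) := hV ▸ Finset.mem_univ x
    simp only [Finset.mem_union, Finset.mem_insert, Finset.mem_singleton] at hx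
    tauto
  -- zero values of w
  have hwst : w s t = 0 := by
    by_contra h
    rcases hw_zero s t h with ⟨_, h2⟩ | ⟨h1, _⟩ | ⟨_, h2⟩ | ⟨h1, _⟩ | ⟨h1, _, _⟩
    exacts [htL h2, hsL h1, htR h2, hsR h1, hsL h1]
  have hwLL : ∀ a ∈ L, ∀ b ∈ L, w a b = 0 := by
    intro a ha b hb
    by_contra h
    rcases hw_zero a b h with ⟨rfl, _⟩ | ⟨_, rfl⟩ | ⟨rfl, _⟩ | ⟨h1, rfl⟩ | ⟨_, h2, _⟩
    exacts [hsL ha, htL hb, hsL ha, htL hb, (Finset.disjoint_left.mp hLR hb) h2]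
  have hwRL : ∀ a ∈ R, ∀ b ∈ L, w a b = 0 := by
    intro a ha b hb
    by_contra h
    rcases hw_zero a b h with ⟨rfl, _⟩ | ⟨h1, rfl⟩ | ⟨rfl, _⟩ | ⟨_, rfl⟩ | ⟨h1, _, _⟩
    exacts [hsR ha, htL hb, hsR ha, htL hb, (Finset.disjoint_left.mp hLR h1) ha]
  have hwRR : ∀ a ∈ R, ∀ b ∈ R, w a b = 0 := by
    intro a ha b hb
    by_contra h
    rcases hw_zero a b h with ⟨rfl, _⟩ | ⟨h1, _⟩ | ⟨rfl, _⟩ | ⟨_, rfl⟩ | ⟨h1, _, _⟩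
    exacts [hsR ha, (Finset.disjoint_left.mp hLR h1) ha, hsR ha, htR hb,
      (Finset.disjoint_left.mp hLR h1) ha]
  -- the closed formula for cut capacities
  have hformula : ∀ C : Finset α, s ∈ C → t ∉ C →
      dirCap w C = L.card + R.card + E.card
        + (E.filter fun p => p.1 ∉ C ∧ p.2 ∈ C).card := by
    intro C hsC htC
    have hCdec : C = insert s ((L.filter (· ∈ C)) ∪ (R.filter (· ∈ C))) := by
      ext x
      simp only [Finset.mem_insert, Finset.mem_union, Finset.mem_filter]
      constructor
      · intro hx
        rcases hmemall x with rfl | rfl | hL | hR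
        · exact Or.inl rfl
        · exact absurd hx htC
        · exact Or.inr (Or.inl ⟨hL, hx⟩)
        · exact Or.inr (Or.inr ⟨hR, hx⟩)
      · rintro (rfl | ⟨_, h⟩ | ⟨_, h⟩)
        exacts [hsC, h, h]
    have hCcdec : Cᶜ = insert t ((L.filter (· ∉ C)) ∪ (R.filter (· ∉ C))) := by
      ext x
      simp only [Finset.mem_compl, Finset.mem_insert, Finset.mem_union, Finset.mem_filter]
      constructor
      · intro hx
        rcases hmemall x with rfl | rfl | hL | hR
        · exact absurd hsC hx
        · exact Or.inl rfl
        · exact Or.inr (Or.inl ⟨hL, hx⟩)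
        · exact Or.inr (Or.inr ⟨hR, hx⟩)
      · rintro (rfl | ⟨_, h⟩ | ⟨_, h⟩)
        exacts [htC, h, h]
    have hsAB : s ∉ (L.filter (· ∈ C)) ∪ (R.filter (· ∈ C)) := by
      simp only [Finset.mem_union, Finset.mem_filter]
      rintro (⟨h, _⟩ | ⟨h, _⟩)
      exacts [hsL h, hsR h]
    have htAB : t ∉ (L.filter (· ∉ C)) ∪ (R.filter (· ∉ C)) := by
      simp only [Finset.mem_union, Finset.mem_filter]
      rintro (⟨h, _⟩ | ⟨h, _⟩)
      exacts [htL h, htR h]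
    have hdA : Disjoint (L.filter (· ∈ C)) (R.filter (· ∈ C)) :=
      hLR.mono (Finset.filter_subset _ _) (Finset.filter_subset _ _)
    have hdB : Disjoint (L.filter (· ∉ C)) (R.filter (· ∉ C)) :=
      hLR.mono (Finset.filter_subset _ _) (Finset.filter_subset _ _)
    have hstep : dirCap w C
        = ∑ a ∈ insert s ((L.filter (· ∈ C)) ∪ (R.filter (· ∈ C))),
            ∑ b ∈ insert t ((L.filter (· ∉ C)) ∪ (R.filter (· ∉ C))), w a b := by
      rw [dirCap, ← hCdec, ← hCcdec]
    rw [hstep]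
    rw [Finset.sum_insert hsAB, Finset.sum_union hdA]
    simp only [Finset.sum_insert htAB, Finset.sum_union hdB]
    -- compute each block
    have h_s_BL : ∑ b ∈ L.filter (· ∉ C), w s b
        = (∑ b ∈ L.filter (· ∉ C), (R.filter fun v => (b, v) ∈ E).card)
          + (L.filter (· ∉ C)).card := by
      calc ∑ b ∈ L.filter (· ∉ C), w s b
          = ∑ b ∈ L.filter (· ∉ C), ((R.filter fun v => (b, v) ∈ E).card + 1) :=
            Finset.sum_congr rfl fun b hb => hw_sL b (Finset.mem_filter.mp hb).1
        _ = _ := by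
            rw [Finset.sum_add_distrib, Finset.sum_const, smul_eq_mul, mul_one]
    have h_s_BR : ∑ b ∈ R.filter (· ∉ C), w s b = (R.filter (· ∉ C)).card := by
      rw [Finset.card_eq_sum_ones]
      exact Finset.sum_congr rfl fun b hb => hw_sR b (Finset.mem_filter.mp hb).1
    have h_AL : ∑ a ∈ L.filter (· ∈ C),
        (w a t + (∑ b ∈ L.filter (· ∉ C), w a b + ∑ b ∈ R.filter (· ∉ C), w a b))
        = (L.filter (· ∈ C)).card
          + ∑ a ∈ L.filter (· ∈ C), ∑ b ∈ R.filter (· ∉ C),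
              (if (a, b) ∈ E then 1 else 0) := by
      calc ∑ a ∈ L.filter (· ∈ C),
            (w a t + (∑ b ∈ L.filter (· ∉ C), w a b + ∑ b ∈ R.filter (· ∉ C), w a b))
          = ∑ a ∈ L.filter (· ∈ C),
              (1 + ∑ b ∈ R.filter (· ∉ C), (if (a, b) ∈ E then 1 else 0)) := by
            refine Finset.sum_congr rfl fun a ha => ?_
            have haL : a ∈ L := (Finset.mem_filter.mp ha).1
            have h1 : ∑ b ∈ L.filter (· ∉ C), w a b = 0 :=
              Finset.sum_eq_zero fun b hb => hwLL a haL b (Finset.mem_filter.mp hb).1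
            have h2 : ∑ b ∈ R.filter (· ∉ C), w a b
                = ∑ b ∈ R.filter (· ∉ C), (if (a, b) ∈ E then 1 else 0) :=
              Finset.sum_congr rfl fun b hb => hw_LR a haL b (Finset.mem_filter.mp hb).1
            rw [hw_Lt a haL, h1, h2, zero_add]
        _ = _ := by
            rw [Finset.sum_add_distrib, Finset.sum_const, smul_eq_mul, mul_one]
    have h_AR : ∑ a ∈ R.filter (· ∈ C),
        (w a t + (∑ b ∈ L.filter (· ∉ C), w a b + ∑ b ∈ R.filter (· ∉ C), w a b))
        = (∑ a ∈ R.filter (· ∈ C), (L.filter fun u => (u, a) ∈ E).card)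
          + (R.filter (· ∈ C)).card := by
      calc ∑ a ∈ R.filter (· ∈ C),
            (w a t + (∑ b ∈ L.filter (· ∉ C), w a b + ∑ b ∈ R.filter (· ∉ C), w a b))
          = ∑ a ∈ R.filter (· ∈ C), ((L.filter fun u => (u, a) ∈ E).card + 1) := by
            refine Finset.sum_congr rfl fun a ha => ?_
            have haR : a ∈ R := (Finset.mem_filter.mp ha).1
            have h1 : ∑ b ∈ L.filter (· ∉ C), w a b = 0 :=
              Finset.sum_eq_zero fun b hb => hwRL a haR b (Finset.mem_filter.mp hb).1
            have h2 : ∑ b ∈ R.filter (· ∉ C), w a b = 0 :=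
              Finset.sum_eq_zero fun b hb => hwRR a haR b (Finset.mem_filter.mp hb).1
            rw [hw_Rt a haR, h1, h2, add_zero, add_zero]
        _ = _ := by
            rw [Finset.sum_add_distrib, Finset.sum_const, smul_eq_mul, mul_one]
    rw [hwst, h_s_BL, h_s_BR, h_AL, h_AR]
    -- cardinalities of the partition pieces
    have hLcard : (L.filter (· ∈ C)).card + (L.filter (· ∉ C)).card = L.card := by
      simpa using Finset.card_filter_add_card_filter_not (s := L) (p := (· ∈ C))
    have hRcard : (R.filter (· ∈ C)).card + (R.filter (· ∉ C)).card = R.card := by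
      simpa using Finset.card_filter_add_card_filter_not (s := R) (p := (· ∈ C))
    -- the combinatorial core
    have hcore : (∑ b ∈ L.filter (· ∉ C), (R.filter fun v => (b, v) ∈ E).card)
        + (∑ a ∈ R.filter (· ∈ C), (L.filter fun u => (u, a) ∈ E).card)
        + (∑ a ∈ L.filter (· ∈ C), ∑ b ∈ R.filter (· ∉ C),
            (if (a, b) ∈ E then 1 else 0))
        = E.card + (E.filter fun p => p.1 ∉ C ∧ p.2 ∈ C).card := by
      have t1 : (∑ b ∈ L.filter (· ∉ C), (R.filter fun v => (b, v) ∈ E).card)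
          = ∑ u ∈ L, ∑ v ∈ R,
              (if u ∉ C then (if (u, v) ∈ E then 1 else 0) else 0) := by
        rw [Finset.sum_filter]
        refine Finset.sum_congr rfl fun u _ => ?_
        by_cases hu : u ∉ C
        · rw [if_pos hu, Finset.card_filter]
          exact Finset.sum_congr rfl fun v _ => (if_pos hu).symm
        · rw [if_neg hu]
          exact (Finset.sum_eq_zero fun v _ => if_neg hu).symm
      have t2 : (∑ a ∈ R.filter (· ∈ C), (L.filter fun u => (u, a) ∈ E).card)
          = ∑ u ∈ L, ∑ v ∈ R,
              (if v ∈ C then (if (u, v) ∈ E then 1 else 0) else 0) := by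
        rw [Finset.sum_comm (s := L) (t := R), Finset.sum_filter]
        refine Finset.sum_congr rfl fun v _ => ?_
        by_cases hv : v ∈ C
        · rw [if_pos hv, Finset.card_filter]
          exact Finset.sum_congr rfl fun u _ => (if_pos hv).symm
        · rw [if_neg hv]
          exact (Finset.sum_eq_zero fun u _ => if_neg hv).symm
      have t3 : (∑ a ∈ L.filter (· ∈ C), ∑ b ∈ R.filter (· ∉ C),
            (if (a, b) ∈ E then 1 else 0))
          = ∑ u ∈ L, ∑ v ∈ R,
              (if u ∈ C then (if v ∉ C then (if (u, v) ∈ E then 1 else 0) else 0)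
               else 0) := by
        rw [Finset.sum_filter]
        refine Finset.sum_congr rfl fun u _ => ?_
        by_cases hu : u ∈ C
        · rw [if_pos hu, Finset.sum_filter]
          exact Finset.sum_congr rfl fun v _ => (if_pos hu).symm
        · rw [if_neg hu]
          exact (Finset.sum_eq_zero fun v _ => if_neg hu).symm
      rw [t1, t2, t3]
      have hsum : ∀ (f g h : α → α → ℕ),
          (∑ u ∈ L, ∑ v ∈ R, f u v) + (∑ u ∈ L, ∑ v ∈ R, g u v)
            + (∑ u ∈ L, ∑ v ∈ R, h u v)
          = ∑ u ∈ L, ∑ v ∈ R, (f u v + g u v + h u v) := by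
        intro f g h
        simp only [Finset.sum_add_distrib]
      rw [hsum]
      have hpt : ∀ u ∈ L, ∀ v ∈ R,
          (if u ∉ C then (if (u, v) ∈ E then 1 else 0) else 0)
            + (if v ∈ C then (if (u, v) ∈ E then 1 else 0) else 0)
            + (if u ∈ C then (if v ∉ C then (if (u, v) ∈ E then 1 else 0) else 0)
               else 0)
          = (if (u, v) ∈ E then 1 else 0)
            + (if (u, v) ∈ E ∧ u ∉ C ∧ v ∈ C then 1 else 0) := by
        intro u _ v _
        by_cases hu : u ∈ C <;> by_cases hv : v ∈ C <;>
          by_cases he : (u, v) ∈ E <;> simp [hu, hv, he]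
      rw [Finset.sum_congr rfl fun u hu => Finset.sum_congr rfl fun v hv => hpt u hu v hv]
      have hsplit : ∀ (f g : α → α → ℕ),
          (∑ u ∈ L, ∑ v ∈ R, (f u v + g u v))
          = (∑ u ∈ L, ∑ v ∈ R, f u v) + (∑ u ∈ L, ∑ v ∈ R, g u v) := by
        intro f g
        simp only [Finset.sum_add_distrib]
      rw [hsplit]
      congr 1
      · rw [← Finset.sum_product']
        have hfe : ((L ×ˢ R).filter fun p => p ∈ E) = E := by
          rw [Finset.filter_mem_eq_inter, Finset.inter_eq_right.mpr hE]
        rw [← hfe, Finset.card_filter]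
        exact Finset.sum_congr rfl fun x _ => by simp [hfe]
      · rw [← Finset.sum_product']
        have hfe : ((L ×ˢ R).filter fun p => p ∈ E ∧ p.1 ∉ C ∧ p.2 ∈ C)
            = E.filter fun p => p.1 ∉ C ∧ p.2 ∈ C := by
          ext p
          simp only [Finset.mem_filter]
          constructor
          · rintro ⟨_, h1, h2⟩; exact ⟨h1, h2⟩
          · rintro ⟨h1, h2⟩; exact ⟨hE h1, h1, h2⟩
        rw [← hfe, Finset.card_filter]
    omega
  -- the difference formula for w'
  have hdiff : ∀ C : Finset α, s ∈ C → t ∉ C →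
      dirCap w' C = dirCap w C
        + ((if v0 ∈ C then 0 else 1) + (if u0 ∈ C then 1 else 0)) := by
    intro C hsC htC
    have hw'eq : ∀ a b : α, w' a b = w a b
        + ((if a = s ∧ b = v0 then 1 else 0) + (if a = u0 ∧ b = t then 1 else 0)) := by
      intro a b
      by_cases h1 : a = s ∧ b = v0
      · have h2 : ¬(a = u0 ∧ b = t) := fun h => hu0s (h.1.symm.trans h1.1)
        rw [if_pos h1, if_neg h2, h1.1, h1.2, hw'1]
      · by_cases h2 : a = u0 ∧ b = t
        · rw [if_pos h2, if_neg h1, h2.1, h2.2, hw'2]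
        · rw [hw'3 a b h1 h2, if_neg h1, if_neg h2, add_zero, add_zero]
    have h0 : dirCap w' C = ∑ a ∈ C, ∑ b ∈ Cᶜ,
        (w a b + ((if a = s ∧ b = v0 then 1 else 0)
          + (if a = u0 ∧ b = t then 1 else 0))) :=
      Finset.sum_congr rfl fun a _ => Finset.sum_congr rfl fun b _ => hw'eq a b
    have e1 : (∑ a ∈ C, ∑ b ∈ Cᶜ, (if a = s ∧ b = v0 then 1 else 0))
        = (if v0 ∈ C then 0 else 1) := by
      have hinner : ∀ a ∈ C, (∑ b ∈ Cᶜ, (if a = s ∧ b = v0 then 1 else 0))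
          = (if a = s then (if v0 ∈ Cᶜ then 1 else 0) else 0) := by
        intro a _
        by_cases ha : a = s
        · rw [if_pos ha]
          rw [show (∑ b ∈ Cᶜ, (if a = s ∧ b = v0 then 1 else 0))
              = ∑ b ∈ Cᶜ, (if b = v0 then 1 else 0) from
            Finset.sum_congr rfl fun b _ => by
              by_cases hb : b = v0 <;> simp [ha, hb]]
          exact Finset.sum_ite_eq' Cᶜ v0 (fun _ => 1)
        · rw [if_neg ha]
          exact Finset.sum_eq_zero fun b _ => if_neg fun h => ha h.1
      rw [Finset.sum_congr rfl hinner, Finset.sum_ite_eq' C s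
        (fun _ => if v0 ∈ Cᶜ then 1 else 0), if_pos hsC]
      by_cases hv : v0 ∈ C <;> simp [hv]
    have e2 : (∑ a ∈ C, ∑ b ∈ Cᶜ, (if a = u0 ∧ b = t then 1 else 0))
        = (if u0 ∈ C then 1 else 0) := by
      have hinner : ∀ a ∈ C, (∑ b ∈ Cᶜ, (if a = u0 ∧ b = t then 1 else 0))
          = (if a = u0 then 1 else 0) := by
        intro a _
        by_cases ha : a = u0
        · rw [if_pos ha]
          rw [show (∑ b ∈ Cᶜ, (if a = u0 ∧ b = t then 1 else 0))
              = ∑ b ∈ Cᶜ, (if b = t then 1 else 0) from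
            Finset.sum_congr rfl fun b _ => by
              by_cases hb : b = t <;> simp [ha, hb]]
          rw [Finset.sum_ite_eq' Cᶜ t (fun _ => 1), if_pos (Finset.mem_compl.mpr htC)]
        · rw [if_neg ha]
          exact Finset.sum_eq_zero fun b _ => if_neg fun h => ha h.1
      rw [Finset.sum_congr rfl hinner]
      exact Finset.sum_ite_eq' C u0 (fun _ => 1)
    have expand : dirCap w' C = dirCap w C
        + ((∑ a ∈ C, ∑ b ∈ Cᶜ, (if a = s ∧ b = v0 then 1 else 0))
          + (∑ a ∈ C, ∑ b ∈ Cᶜ, (if a = u0 ∧ b = t then 1 else 0))) := by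
      rw [h0, dirCap]
      simp only [Finset.sum_add_distrib]
    rw [expand, e1, e2]
  -- value of λ(w)
  have hts' : t ∉ ({s} : Finset α) := by simpa using hts
  have hsingle : dirCap w {s} = L.card + R.card + E.card := by
    rw [hformula {s} (Finset.mem_singleton_self s) hts']
    have he : (E.filter fun p => p.1 ∉ ({s} : Finset α) ∧ p.2 ∈ ({s} : Finset α)) = ∅ := by
      rw [Finset.filter_eq_empty_iff]
      rintro p hp ⟨_, h2⟩
      have hp2 : p.2 ∈ R := (Finset.mem_product.mp (hE hp)).2
      rw [Finset.mem_singleton] at h2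
      exact hsR (h2 ▸ hp2)
    rw [he]
    simp
  have hlamw : stLambda w s t = L.card + R.card + E.card := by
    apply le_antisymm
    · exact Nat.sInf_le ⟨{s}, Finset.mem_singleton_self s, hts', hsingle⟩
    · refine le_csInf ⟨dirCap w {s}, ⟨{s}, Finset.mem_singleton_self s, hts', rfl⟩⟩ ?_
      rintro n ⟨C, hsC, htC, rfl⟩
      rw [hformula C hsC htC]
      omega
  constructor
  · -- case (u0, v0) ∈ E
    intro hEmem
    rw [hlamw]
    apply le_antisymm
    · refine Nat.sInf_le ⟨{s}, Finset.mem_singleton_self s, hts', ?_⟩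
      rw [hdiff {s} (Finset.mem_singleton_self s) hts', hsingle]
      have h1 : v0 ∉ ({s} : Finset α) := by simpa using hv0s
      have h2 : u0 ∉ ({s} : Finset α) := by simpa using hu0s
      rw [if_neg h1, if_neg h2]
    · refine le_csInf ⟨dirCap w' {s}, ⟨{s}, Finset.mem_singleton_self s, hts', rfl⟩⟩ ?_
      rintro n ⟨C, hsC, htC, rfl⟩
      rw [hdiff C hsC htC, hformula C hsC htC]
      by_cases hu : u0 ∈ C
      · simp only [hu, if_true]; omega
      · by_cases hv : v0 ∈ C
        · have hmem1 : (u0, v0) ∈ E.filter fun p => p.1 ∉ C ∧ p.2 ∈ C :=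
            Finset.mem_filter.mpr ⟨hEmem, hu, hv⟩
          have hcard : 1 ≤ (E.filter fun p => p.1 ∉ C ∧ p.2 ∈ C).card :=
            Finset.card_pos.mpr ⟨_, hmem1⟩
          omega
        · simp only [hv, if_false]; omega
  · -- case (u0, v0) ∉ E
    intro hEnot
    rw [hlamw]
    apply le_antisymm
    · set Cs : Finset α := insert s (insert v0 (L.filter fun u => (u, v0) ∈ E)) with hCs
      have hsCs : s ∈ Cs := Finset.mem_insert_self s _
      have htCs : t ∉ Cs := by
        simp only [hCs, Finset.mem_insert, Finset.mem_filter]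
        rintro (h | h | ⟨h, _⟩)
        exacts [hts h, hv0t h.symm, htL h]
      have hu0Cs : u0 ∉ Cs := by
        simp only [hCs, Finset.mem_insert, Finset.mem_filter]
        rintro (h | h | ⟨_, h⟩)
        exacts [hu0s h, hu0v0 h, hEnot h]
      have hv0Cs : v0 ∈ Cs := Finset.mem_insert.mpr (Or.inr (Finset.mem_insert_self v0 _))
      have hex : (E.filter fun p => p.1 ∉ Cs ∧ p.2 ∈ Cs) = ∅ := by
        rw [Finset.filter_eq_empty_iff]
        rintro p hp ⟨h1, h2⟩
        have hp1 : p.1 ∈ L := (Finset.mem_product.mp (hE hp)).1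
        have hp2 : p.2 ∈ R := (Finset.mem_product.mp (hE hp)).2
        have hp2v0 : p.2 = v0 := by
          rcases Finset.mem_insert.mp h2 with h | h
          · exact absurd (h ▸ hp2) hsR
          · rcases Finset.mem_insert.mp h with h | h
            · exact h
            · exact absurd (Finset.mem_filter.mp h).1
                (Finset.disjoint_right.mp hLR hp2)
        apply h1
        refine Finset.mem_insert.mpr (Or.inr (Finset.mem_insert.mpr (Or.inr ?_)))
        exact Finset.mem_filter.mpr ⟨hp1, by rw [← hp2v0]; exact hp⟩
      refine Nat.sInf_le ⟨Cs, hsCs, htCs, ?_⟩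
      rw [hdiff Cs hsCs htCs, hformula Cs hsCs htCs, hex]
      rw [if_pos hv0Cs, if_neg hu0Cs]
      simp
    · refine le_csInf ⟨dirCap w' {s}, ⟨{s}, Finset.mem_singleton_self s, hts', rfl⟩⟩ ?_
      rintro n ⟨C, hsC, htC, rfl⟩
      rw [hdiff C hsC htC, hformula C hsC htC]
      omega

end Paper
end
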